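/- arXiv:2604.04772 — 2 statements merged into one kernel-verified Lean document; each statement's English description precedes it below -/
import Mathlib

section
/- Let α, β, γ ≥ 0 and let h, p : ℝ → ℝ be differentiable functions such that h(0) ≥ 0, p(0) ≥ 0, p'(t) + β·p(t) ≥ 0 for all t ≥ 0, and h'(t) ≥ p(t) − (α+γ)·h(t) for all t ≥ 0. Then h(t) ≥ 0 for all t ≥ 0. -/
/-!
Multiplying by the integrating factor `exp (c t)` turns `f' + c f ≥ 0` into monotonicity of
`exp (c t) f t`, so `f` keeps the sign of `f a` on `[a, ∞)`. Applied with `c = β` this makes `p`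
nonnegative, after which `h' + (α + γ) h ≥ p ≥ 0` and the same argument makes `h` nonnegative.
-/

open Real Set

theorem hasDerivAt_exp_mul_mul {f : ℝ → ℝ} {f' : ℝ} (c x : ℝ) (hf : HasDerivAt f f' x) :
    HasDerivAt (fun t => exp (c * t) * f t) (exp (c * x) * (f' + c * f x)) x := by
  have hexp : HasDerivAt (fun t => exp (c * t)) (exp (c * x) * c) x := by
    simpa using ((hasDerivAt_id x).const_mul c).exp
  exact (hexp.mul hf).congr_deriv (by ring)

theorem monotoneOn_exp_mul_mul_of_deriv_add_mul_nonneg {f : ℝ → ℝ} {a : ℝ} (c : ℝ)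
    (hf : Differentiable ℝ f) (hd : ∀ t, a ≤ t → 0 ≤ deriv f t + c * f t) :
    MonotoneOn (fun t => exp (c * t) * f t) (Ici a) := by
  have hderiv t := hasDerivAt_exp_mul_mul c t (hf t).hasDerivAt
  refine monotoneOn_of_deriv_nonneg (convex_Ici a)
    (HasDerivAt.continuousOn fun t _ => hderiv t)
    (fun t _ => (hderiv t).differentiableAt.differentiableWithinAt) fun t ht => ?_
  rw [interior_Ici] at ht
  rw [(hderiv t).deriv]
  exact mul_nonneg (exp_pos _).le (hd t (le_of_lt ht))

theorem nonneg_of_deriv_add_mul_nonneg {f : ℝ → ℝ} {a c : ℝ} (hf : Differentiable ℝ f)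
    (ha : 0 ≤ f a) (hd : ∀ t, a ≤ t → 0 ≤ deriv f t + c * f t) :
    ∀ t, a ≤ t → 0 ≤ f t := by
  intro t ht
  have hmono := monotoneOn_exp_mul_mul_of_deriv_add_mul_nonneg c hf hd self_mem_Ici ht ht
  have : 0 ≤ exp (c * t) * f t := (mul_nonneg (exp_pos _).le ha).trans hmono
  exact nonneg_of_mul_nonneg_right this (exp_pos _)

theorem ccbf_forward_invariance_general (α β γ : ℝ)
    (h p : ℝ → ℝ) (hdiff : Differentiable ℝ h) (pdiff : Differentiable ℝ p)
    (h0 : 0 ≤ h 0) (p0 : 0 ≤ p 0)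
    (hp : ∀ t, 0 ≤ t → deriv p t + β * p t ≥ 0)
    (hh : ∀ t, 0 ≤ t → deriv h t ≥ p t - (α + γ) * h t) :
    ∀ t, 0 ≤ t → 0 ≤ h t := by
  have p_nonneg := nonneg_of_deriv_add_mul_nonneg pdiff p0 hp
  exact nonneg_of_deriv_add_mul_nonneg (c := α + γ) hdiff h0 fun t ht => by
    linarith [hh t ht, p_nonneg t ht]

/-- Time-domain abstraction of Lemma 1 (CCBF forward invariance). -/
theorem ccbf_forward_invariance (α β γ : ℝ) (hα : 0 ≤ α) (hβ : 0 ≤ β) (hγ : 0 ≤ γ)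
    (h p : ℝ → ℝ) (hdiff : Differentiable ℝ h) (pdiff : Differentiable ℝ p)
    (h0 : 0 ≤ h 0) (p0 : 0 ≤ p 0)
    (hp : ∀ t, 0 ≤ t → deriv p t + β * p t ≥ 0)
    (hh : ∀ t, 0 ≤ t → deriv h t ≥ p t - (α + γ) * h t) :
    ∀ t, 0 ≤ t → 0 ≤ h t :=
  ccbf_forward_invariance_general α β γ h p hdiff pdiff h0 p0 hp hh
end

section
/- Let N ∈ ℕ, let x : ℝ → ℝ^N be a differentiable curve, let h : ℝ^N → ℝ be a function such that t ↦ h(x(t)) is differentiable, and let α, β, γ ≥ 0. Suppose there is a differentiable p : ℝ → ℝ with p(0) ≥ 0, p'(t) + β·p(t) ≥ 0 for all t ≥ 0, and (d/dt) h(x(t)) ≥ p(t) − (α+γ)·h(x(t)) for all t ≥ 0. If x(0) lies in C := {y ∈ ℝ^N : h(y) ≥ 0}, then x(t) ∈ C for all t ≥ 0. -/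
/-!
Both `p` and `h ∘ x` satisfy a linear differential inequality `f' ≥ -c f` with `f 0 ≥ 0`:
for `p` with `c = β`, and then for `h ∘ x` with `c = α + γ`, since `p ≥ 0` can be dropped from
the right-hand side. Such an `f` stays nonnegative because `exp (c t) * f t` is nondecreasing.
-/

open Set Real

theorem monotoneOn_exp_mul_of_neg_mul_le_deriv {f : ℝ → ℝ} (hf : Differentiable ℝ f) {a : ℝ}
    (c : ℝ) (hd : ∀ t, a ≤ t → -c * f t ≤ deriv f t) :
    MonotoneOn (fun t => exp (c * t) * f t) (Ici a) := by
  have hderiv : ∀ t, HasDerivAt (fun t => exp (c * t) * f t)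
      (c * exp (c * t) * f t + exp (c * t) * deriv f t) t := fun t => by
    have hexp : HasDerivAt (fun s => exp (c * s)) (exp (c * t) * c) t :=
      ((hasDerivAt_id t).const_mul c).exp.congr_deriv (by simp)
    exact (hexp.mul (hf t).hasDerivAt).congr_deriv (by ring)
  refine monotoneOn_of_deriv_nonneg (convex_Ici a)
    (fun t _ => (hderiv t).continuousAt.continuousWithinAt)
    (fun t _ => (hderiv t).differentiableAt.differentiableWithinAt) fun t ht => ?_
  rw [interior_Ici] at ht
  rw [(hderiv t).deriv]
  have hweighted : 0 ≤ exp (c * t) * (c * f t + deriv f t) :=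
    mul_nonneg (exp_pos _).le (by linarith [hd t (le_of_lt ht)])
  linarith

theorem nonneg_of_neg_mul_le_deriv {f : ℝ → ℝ} (hf : Differentiable ℝ f) {a : ℝ} (c : ℝ)
    (ha : 0 ≤ f a) (hd : ∀ t, a ≤ t → -c * f t ≤ deriv f t) :
    ∀ t, a ≤ t → 0 ≤ f t := fun t ht => by
  have hmono : exp (c * a) * f a ≤ exp (c * t) * f t :=
    monotoneOn_exp_mul_of_neg_mul_le_deriv hf c hd self_mem_Ici ht ht
  have hweighted : 0 ≤ exp (c * t) * f t := (mul_nonneg (exp_pos _).le ha).trans hmono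
  exact nonneg_of_mul_nonneg_right hweighted (exp_pos _)

theorem safe_set_forward_invariant_general (N : ℕ)
    (x : ℝ → EuclideanSpace ℝ (Fin N))
    (h : EuclideanSpace ℝ (Fin N) → ℝ)
    (hhx : Differentiable ℝ (fun t => h (x t)))
    (α β γ : ℝ)
    (p : ℝ → ℝ) (pdiff : Differentiable ℝ p) (p0 : 0 ≤ p 0)
    (hp : ∀ t, 0 ≤ t → deriv p t + β * p t ≥ 0)
    (hh : ∀ t, 0 ≤ t →
      deriv (fun s => h (x s)) t ≥ p t - (α + γ) * h (x t))
    (hx0 : x 0 ∈ {y : EuclideanSpace ℝ (Fin N) | h y ≥ 0}) :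
    ∀ t, 0 ≤ t → x t ∈ {y : EuclideanSpace ℝ (Fin N) | h y ≥ 0} := by
  have hp_nonneg : ∀ t, 0 ≤ t → 0 ≤ p t :=
    nonneg_of_neg_mul_le_deriv pdiff β p0 fun t ht => by linarith [hp t ht]
  exact nonneg_of_neg_mul_le_deriv hhx (α + γ) hx0 fun t ht => by
    linarith [hh t ht, hp_nonneg t ht]

/-- State-space statement of Lemma 1: forward invariance of the safe set
`C = {y | h y ≥ 0}` along the closed-loop trajectory `x`. -/
theorem safe_set_forward_invariant (N : ℕ)
    (x : ℝ → EuclideanSpace ℝ (Fin N)) (hx : Differentiable ℝ x)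
    (h : EuclideanSpace ℝ (Fin N) → ℝ)
    (hhx : Differentiable ℝ (fun t => h (x t)))
    (α β γ : ℝ) (hα : 0 ≤ α) (hβ : 0 ≤ β) (hγ : 0 ≤ γ)
    (p : ℝ → ℝ) (pdiff : Differentiable ℝ p) (p0 : 0 ≤ p 0)
    (hp : ∀ t, 0 ≤ t → deriv p t + β * p t ≥ 0)
    (hh : ∀ t, 0 ≤ t →
      deriv (fun s => h (x s)) t ≥ p t - (α + γ) * h (x t))
    (hx0 : x 0 ∈ {y : EuclideanSpace ℝ (Fin N) | h y ≥ 0}) :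
    ∀ t, 0 ≤ t → x t ∈ {y : EuclideanSpace ℝ (Fin N) | h y ≥ 0} :=
  safe_set_forward_invariant_general N x h hhx α β γ p pdiff p0 hp hh hx0
end
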